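/- arXiv:2108.13523 — 3 statements merged into one kernel-verified Lean document; each statement's English description precedes it below -/
import Mathlib

section
/- There exists a universal constant C4 > 0 such that for all integers d ≥ 2 and M ≥ 4d, one has (2·M·Σ_{i=0}^{d−2} C(M−2, i)) / (Σ_{i=0}^{d−1} C(M−1, i)) ≤ C4·d, where C(n, k) denotes the binomial coefficient 'n choose k'. (This quantity is the expected number of faces of a cell drawn uniformly at random from the spherical tessellation of S^{d-1} induced by M hyperplanes through the origin with normal vectors in general position.) -/
theorem aux_nat (d M : ℕ) (hd : 2 ≤ d) (hM : 4 * d ≤ M) :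
    2 * M * ∑ i ∈ Finset.range (d - 1), (M - 2).choose i ≤
      4 * d * ∑ i ∈ Finset.range d, (M - 1).choose i := by
  have hM8 : 8 ≤ M := by omega
  have h1 : M - 1 = (M - 2) + 1 := by omega
  have key : ∀ i ∈ Finset.range (d - 1),
      2 * M * (M - 2).choose i ≤ 4 * d * (M - 1).choose (i + 1) := by
    intro i hi
    simp only [Finset.mem_range] at hi
    have hs : (M - 2 + 1) * (M - 2).choose i = (M - 2 + 1).choose (i + 1) * (i + 1) :=
      Nat.add_one_mul_choose_eq (M - 2) i
    rw [h1]
    have h2 : 2 * M ≤ 4 * (M - 2 + 1) := by omega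
    calc 2 * M * (M - 2).choose i ≤ 4 * (M - 2 + 1) * (M - 2).choose i :=
          Nat.mul_le_mul_right _ h2
      _ = 4 * ((M - 2 + 1).choose (i + 1) * (i + 1)) := by rw [mul_assoc, hs]
      _ ≤ 4 * ((M - 2 + 1).choose (i + 1) * d) := by
          exact Nat.mul_le_mul_left _ (Nat.mul_le_mul_left _ (by omega))
      _ = 4 * d * (M - 2 + 1).choose (i + 1) := by ring
  calc 2 * M * ∑ i ∈ Finset.range (d - 1), (M - 2).choose i
      = ∑ i ∈ Finset.range (d - 1), 2 * M * (M - 2).choose i := Finset.mul_sum _ _ _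
    _ ≤ ∑ i ∈ Finset.range (d - 1), 4 * d * (M - 1).choose (i + 1) :=
        Finset.sum_le_sum key
    _ = 4 * d * ∑ i ∈ Finset.range (d - 1), (M - 1).choose (i + 1) :=
        (Finset.mul_sum _ _ _).symm
    _ ≤ 4 * d * ∑ i ∈ Finset.range d, (M - 1).choose i := by
        apply Nat.mul_le_mul_left
        have hd1 : d = (d - 1) + 1 := by omega
        rw [hd1, Finset.sum_range_succ']
        exact Nat.le_add_right _ _

theorem stmt_8 :
    ∃ C4 : ℝ, 0 < C4 ∧
      ∀ d M : ℕ, 2 ≤ d → 4 * d ≤ M →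
        (2 * (M : ℝ) * ∑ i ∈ Finset.range (d - 1), ((M - 2).choose i : ℝ)) /
            (∑ i ∈ Finset.range d, ((M - 1).choose i : ℝ)) ≤ C4 * d := by
  refine ⟨4, by norm_num, fun d M hd hM => ?_⟩
  have hpos : (0 : ℝ) < ∑ i ∈ Finset.range d, ((M - 1).choose i : ℝ) := by
    apply Finset.sum_pos' (fun i _ => by positivity)
    refine ⟨0, Finset.mem_range.mpr (by omega), by simp⟩
  rw [div_le_iff₀ hpos]
  have := aux_nat d M hd hM
  have hcast : (2 * M * ∑ i ∈ Finset.range (d - 1), (M - 2).choose i : ℝ) ≤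
      (4 * d * ∑ i ∈ Finset.range d, (M - 1).choose i : ℝ) := by exact_mod_cast this
  push_cast at hcast
  linarith
end

section
/- Let d ≥ 2, let g ∈ ℝ^d and y ∈ S^{d-1}, and let τ > 0. Suppose that: g₁ < 0 and |g₁| < τ; y₁ > 0; ⟨g_{[-1]}, y_{[-1]}⟩ > 0; ‖y_{[-1]}‖₂ > 0; and g₁²·y₁ > −g₁·⟨g_{[-1]}, y_{[-1]}⟩. Then y₁² ≥ 1 − τ²/(⟨g_{[-1]}, y_{[-1]}/‖y_{[-1]}‖₂⟩² + τ²). -/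
/-- The index of the `(j+1)`-st coordinate: used to remove the first coordinate of a vector. -/
def succIdx {d : ℕ} (j : Fin (d - 1)) : Fin d :=
  ⟨j.val + 1, by have := j.isLt; omega⟩

set_option maxHeartbeats 1000000 in
theorem stmt_10 (d : ℕ) (hd : 2 ≤ d) (g : EuclideanSpace ℝ (Fin d))
    (y : EuclideanSpace ℝ (Fin d)) (hy : ‖y‖ = 1) (τ : ℝ) (hτ : 0 < τ)
    (hg1 : g ⟨0, by omega⟩ < 0) (hg1τ : |g ⟨0, by omega⟩| < τ)
    (hy1 : 0 < y ⟨0, by omega⟩)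
    (hip : 0 < ∑ j : Fin (d - 1), g (succIdx j) * y (succIdx j))
    (hyt : 0 < Real.sqrt (∑ j : Fin (d - 1), (y (succIdx j)) ^ 2))
    (hfeas : (g ⟨0, by omega⟩) ^ 2 * y ⟨0, by omega⟩ >
      -(g ⟨0, by omega⟩) * ∑ j : Fin (d - 1), g (succIdx j) * y (succIdx j)) :
    (y ⟨0, by omega⟩) ^ 2 ≥
      1 - τ ^ 2 /
        (((∑ j : Fin (d - 1), g (succIdx j) * y (succIdx j)) /
            Real.sqrt (∑ j : Fin (d - 1), (y (succIdx j)) ^ 2)) ^ 2 + τ ^ 2) := by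
  obtain ⟨n, rfl⟩ : ∃ n, d = n + 1 := ⟨d - 1, by omega⟩
  set a : ℝ := g ⟨0, by omega⟩ with ha
  set y1 : ℝ := y ⟨0, by omega⟩ with hy1def
  set S : ℝ := ∑ j : Fin (n + 1 - 1), g (succIdx j) * y (succIdx j) with hS
  set Q : ℝ := ∑ j : Fin (n + 1 - 1), (y (succIdx j)) ^ 2 with hQdef
  have hQnonneg : 0 ≤ Q := Finset.sum_nonneg fun i _ => sq_nonneg _
  set N : ℝ := Real.sqrt Q with hN
  have hNpos : 0 < N := hyt
  have hN2 : N ^ 2 = Q := Real.sq_sqrt hQnonneg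
  have hQpos : 0 < Q := hN2 ▸ pow_pos hNpos 2
  -- norm identity
  have hsum : ∑ i : Fin (n + 1), (y i) ^ 2 = 1 := by
    have h := EuclideanSpace.norm_eq y
    rw [hy] at h
    have h2 : Real.sqrt (∑ i : Fin (n + 1), ‖y i‖ ^ 2) = 1 := h.symm
    have h3 : (∑ i : Fin (n + 1), ‖y i‖ ^ 2) = 1 := by
      have := Real.sq_sqrt (show 0 ≤ ∑ i : Fin (n + 1), ‖y i‖ ^ 2 from
        Finset.sum_nonneg fun i _ => sq_nonneg _)
      rw [h2] at this; linarith
    rw [← h3]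
    exact Finset.sum_congr rfl fun i _ => by rw [Real.norm_eq_abs, sq_abs]
  have hsplit : y1 ^ 2 + Q = 1 := by
    rw [← hsum, Fin.sum_univ_succ]
    congr 1
  -- key inequality: S < τ * y1
  have hneg : 0 < -a := by linarith
  have habs : -a < τ := by rwa [abs_of_neg hg1] at hg1τ
  have hS1 : -a * ((-a) * y1 - S) > 0 := by nlinarith [hfeas]
  have hS2 : S < (-a) * y1 := by nlinarith
  have hSτ : S < τ * y1 := by nlinarith
  have hSsq : S ^ 2 < τ ^ 2 * y1 ^ 2 := by nlinarith [hip]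
  -- rewrite (S/N)^2 = S^2 / Q
  have hdiv : (S / N) ^ 2 = S ^ 2 / Q := by
    rw [div_pow, hN2]
  rw [hdiv]
  have hD : 0 < S ^ 2 / Q + τ ^ 2 := by positivity
  rw [ge_iff_le, sub_le_iff_le_add, ← sub_le_iff_le_add', ← hsplit]
  have : y1 ^ 2 + Q - y1 ^ 2 = Q := by ring
  rw [this, le_div_iff₀ hD]
  have hQD : Q * (S ^ 2 / Q + τ ^ 2) = S ^ 2 + τ ^ 2 * Q := by
    field_simp
  rw [hQD]
  nlinarith [hsplit, hSsq]
end

section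
/- Let γ be a standard real Gaussian random variable (law N(0,1)) and let 0 ≤ t < 1/2. Then E[exp(γ²/4) · 1{γ > t}] / P(γ > t) = √2 · P(γ ≥ t/√2) / P(γ ≥ t), and this quantity is at most 2. Consequently, the law of γ conditioned on {γ > t} is subgaussian with Orlicz ψ₂-norm at most 2. -/
/-!
Completing the square, `φ(x) e^{x²/4} = √2 φ₂(x)` with `φ₂` the density of `N(0,2)`, so the
numerator is `√2 P(√2 γ > t) = √2 P(γ ≥ t/√2)`. For the bound write `s = t/√2` and express both
tails through `P(γ ≥ 0) = 1/2` minus the masses of `[0, s)` and `[s, t)`; the density is at most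
`c = 1/√(2π)`, so intervals have mass at most `c` times their length, which leaves
`2 P(γ ≥ t) - √2 P(γ ≥ s) ≥ (2 - √2)/2 - c t ≥ 0` for `t < 1/2`. Hence `w = 2` is admissible in
the definition of the `ψ₂`-norm of the conditioned law.
-/

open MeasureTheory ProbabilityTheory Real Set

lemma gaussianPDFReal_le (μ : ℝ) (v : NNReal) (x : ℝ) :
    gaussianPDFReal μ v x ≤ (√(2 * π * v))⁻¹ :=
  mul_le_of_le_one_right (by positivity)
    (exp_le_one_iff.mpr (div_nonpos_of_nonpos_of_nonneg (by nlinarith) (by positivity)))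

lemma gaussianPDFReal_mul_exp_sq_div (μ : ℝ) (v : NNReal) (x : ℝ) :
    gaussianPDFReal μ v x * exp ((x - μ) ^ 2 / (4 * v))
      = √2 * gaussianPDFReal μ (2 * v) x := by
  have h : √(2 * π * ↑(2 * v)) = √2 * √(2 * π * v) := by
    rw [← sqrt_mul zero_le_two]; push_cast; ring_nf
  rw [gaussianPDFReal, gaussianPDFReal, h, mul_inv, mul_assoc, ← exp_add]
  push_cast
  field_simp
  ring_nf

lemma setIntegral_exp_sq_div_gaussianReal (μ : ℝ) {v : NNReal} (hv : v ≠ 0) {s : Set ℝ}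
    (hs : MeasurableSet s) :
    ∫ x in s, exp ((x - μ) ^ 2 / (4 * v)) ∂gaussianReal μ v
      = √2 * (gaussianReal μ (2 * v)).real s := by
  rw [measureReal_def, gaussianReal_apply_eq_integral _ (mul_ne_zero two_ne_zero hv),
    ENNReal.toReal_ofReal (setIntegral_nonneg hs fun x _ ↦ gaussianPDFReal_nonneg _ _ _),
    ← integral_const_mul, gaussianReal_of_var_ne_zero _ hv,
    setIntegral_withDensity_eq_setIntegral_toReal_smul (f := gaussianPDF μ v)
      (measurable_gaussianPDF _ _) (ae_of_all _ fun _ ↦ gaussianPDF_lt_top) _ hs]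
  simp only [toReal_gaussianPDF, smul_eq_mul, gaussianPDFReal_mul_exp_sq_div]

lemma gaussianReal_map_sqrt_two_mul (μ : ℝ) (v : NNReal) :
    (gaussianReal μ v).map (√2 * ·) = gaussianReal (√2 * μ) (2 * v) := by
  rw [gaussianReal_map_const_mul]
  congr
  simp

lemma gaussianReal_real_Ici_eq_Ioi (μ : ℝ) {v : NNReal} (hv : v ≠ 0) (a : ℝ) :
    (gaussianReal μ v).real (Ici a) = (gaussianReal μ v).real (Ioi a) :=
  have := nullSingletonClass_gaussianReal (μ := μ) hv
  measureReal_congr Ioi_ae_eq_Ici.symm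

lemma gaussianReal_real_Ici_pos (μ : ℝ) {v : NNReal} (hv : v ≠ 0) (a : ℝ) :
    0 < (gaussianReal μ v).real (Ici a) :=
  ENNReal.toReal_pos (mt (fun h ↦ gaussianReal_absolutelyContinuous' μ hv h) (by simp))
    (measure_ne_top _ _)

lemma gaussianReal_real_Ici_self (μ : ℝ) {v : NNReal} (hv : v ≠ 0) :
    (gaussianReal μ v).real (Ici μ) = 1 / 2 := by
  have := nullSingletonClass_gaussianReal (μ := μ) hv
  have hsymm : (gaussianReal μ v).map (2 * μ - ·) = gaussianReal μ v := by
    rw [gaussianReal_map_const_sub]; ring_nf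
  have hIic : (gaussianReal μ v).real (Iic μ) = (gaussianReal μ v).real (Ici μ) := by
    conv_lhs => rw [← hsymm]
    rw [map_measureReal_apply (by fun_prop) measurableSet_Iic, preimage_const_sub_Iic, two_mul,
      add_sub_cancel_right]
  have hcompl :=
    measureReal_add_measureReal_compl (μ := gaussianReal μ v) (measurableSet_Ici (a := μ))
  rw [compl_Ici, measureReal_congr Iio_ae_eq_Iic, hIic, probReal_univ] at hcompl
  linarith

lemma measureReal_Ici_eq_Ico_add_Ici {α : Type*} [LinearOrder α] [MeasurableSpace α]
    [TopologicalSpace α] [OpensMeasurableSpace α] [ClosedIciTopology α]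
    (μ : Measure α) [IsFiniteMeasure μ] {a b : α} (hab : a ≤ b) :
    μ.real (Ici a) = μ.real (Ico a b) + μ.real (Ici b) := by
  rw [← Ico_union_Ici_eq_Ici hab,
    measureReal_union ((Iio_disjoint_Ici le_rfl).mono_left Ico_subset_Iio_self) measurableSet_Ici]

lemma gaussianReal_real_le_mul_volume_real (μ : ℝ) {v : NNReal} (hv : v ≠ 0) {s : Set ℝ}
    (hs : volume s < ⊤) :
    (gaussianReal μ v).real s ≤ (√(2 * π * v))⁻¹ * volume.real s := by
  rw [measureReal_def, gaussianReal_apply_eq_integral _ hv,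
    ENNReal.toReal_ofReal (integral_nonneg fun x ↦ gaussianPDFReal_nonneg _ _ _)]
  refine (le_norm_self _).trans (norm_setIntegral_le_of_norm_le_const hs fun x _ ↦ ?_)
  rw [norm_of_nonneg (gaussianPDFReal_nonneg _ _ _)]
  exact gaussianPDFReal_le μ v x

lemma sqrt_two_mul_gaussianReal_real_Ici_div_sqrt_two_le {t : ℝ} (ht0 : 0 ≤ t)
    (ht : t < 1 / 2) :
    √2 * (gaussianReal 0 1).real (Ici (t / √2)) ≤ 2 * (gaussianReal 0 1).real (Ici t) := by
  set s := t / √2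
  have hs : √2 * s = t := mul_div_cancel₀ t (by positivity)
  have hs0 : 0 ≤ s := by positivity
  have hst : s ≤ t := div_le_self ht0 one_lt_sqrt_two.le
  have hIco (a b : ℝ) (hab : a ≤ b) :
      (gaussianReal 0 1).real (Ico a b) ≤ (√(2 * π))⁻¹ * (b - a) := by
    simpa [volume_real_Ico_of_le hab] using
      gaussianReal_real_le_mul_volume_real 0 one_ne_zero (s := Ico a b) measure_Ico_lt_top
  have hsplit_zero := measureReal_Ici_eq_Ico_add_Ici (gaussianReal 0 1) hs0
  have hsplit_s := measureReal_Ici_eq_Ico_add_Ici (gaussianReal 0 1) hst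
  rw [gaussianReal_real_Ici_self 0 one_ne_zero] at hsplit_zero
  set c := (√(2 * π))⁻¹
  have hc : c ≤ 2 / 5 := by
    rw [inv_le_comm₀ (by positivity) (by norm_num), le_sqrt (by norm_num) (by positivity)]
    nlinarith [pi_gt_d2]
  have hsqrt2 : √2 ≤ 3 / 2 := by
    rw [sqrt_le_left (by norm_num)]; norm_num
  -- `2 P[t, ∞) - √2 P[s, ∞) = (2 - √2) (1/2 - P[0, s)) - 2 P[s, t) ≥ (2 - √2)/2 - c t`,
  -- using `√2 s = t`.
  have h0s := mul_le_mul_of_nonneg_left (hIco 0 s hs0) (by linarith : (0 : ℝ) ≤ 2 - √2)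
  have hct : c * t ≤ 1 / 5 := by nlinarith [inv_nonneg.mpr (sqrt_nonneg (2 * π))]
  have hcs : c * (√2 * s) = c * t := by rw [hs]
  have hsplit_zero' := congrArg (√2 * ·) hsplit_zero
  simp only [mul_add] at hsplit_zero'
  linarith [hIco s t hst]

lemma setIntegral_Ioi_exp_sq_div_four_gaussianReal (t : ℝ) :
    ∫ x in Ioi t, exp (x ^ 2 / 4) ∂gaussianReal 0 1
      = √2 * (gaussianReal 0 1).real (Ici (t / √2)) := by
  have h := setIntegral_exp_sq_div_gaussianReal 0 one_ne_zero (measurableSet_Ioi (a := t))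
  simp only [sub_zero, NNReal.coe_one, mul_one] at h
  have hmap := gaussianReal_map_sqrt_two_mul 0 1
  rw [mul_zero, mul_one] at hmap
  rw [h, ← hmap, map_measureReal_apply (by fun_prop) measurableSet_Ioi,
    preimage_const_mul_Ioi₀ t (by positivity), gaussianReal_real_Ici_eq_Ioi 0 one_ne_zero]

lemma integral_cond_eq_div {Ω : Type*} [MeasurableSpace Ω] (μ : Measure Ω) (s : Set Ω)
    (f : Ω → ℝ) :
    ∫ x, f x ∂μ[|s] = (∫ x in s, f x ∂μ) / μ.real s := by
  rw [ProbabilityTheory.cond, integral_smul_measure, ENNReal.toReal_inv, smul_eq_mul,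
    inv_mul_eq_div, measureReal_def]

theorem stmt_12 (t : ℝ) (ht0 : 0 ≤ t) (ht : t < 1 / 2) :
    (∫ x in Set.Ioi t, Real.exp (x ^ 2 / 4) ∂(gaussianReal 0 1)) /
        ((gaussianReal 0 1) (Set.Ioi t)).toReal =
      Real.sqrt 2 * ((gaussianReal 0 1) (Set.Ici (t / Real.sqrt 2))).toReal /
        ((gaussianReal 0 1) (Set.Ici t)).toReal ∧
    (∫ x in Set.Ioi t, Real.exp (x ^ 2 / 4) ∂(gaussianReal 0 1)) /
        ((gaussianReal 0 1) (Set.Ioi t)).toReal ≤ 2 ∧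
    sInf {w : ℝ | 0 < w ∧
        ∫ x, Real.exp (x ^ 2 / w ^ 2) ∂((gaussianReal 0 1)[|Set.Ioi t]) ≤ 2} ≤ 2 := by
  simp only [← measureReal_def]
  have hratio :
      (∫ x in Ioi t, exp (x ^ 2 / 4) ∂gaussianReal 0 1) / (gaussianReal 0 1).real (Ioi t) =
        √2 * (gaussianReal 0 1).real (Ici (t / √2)) / (gaussianReal 0 1).real (Ici t) := by
    rw [setIntegral_Ioi_exp_sq_div_four_gaussianReal, gaussianReal_real_Ici_eq_Ioi 0 one_ne_zero t]
  have hle :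
      (∫ x in Ioi t, exp (x ^ 2 / 4) ∂gaussianReal 0 1) / (gaussianReal 0 1).real (Ioi t) ≤ 2 := by
    rw [hratio, div_le_iff₀ (gaussianReal_real_Ici_pos 0 one_ne_zero t)]
    exact sqrt_two_mul_gaussianReal_real_Ici_div_sqrt_two_le ht0 ht
  refine ⟨hratio, hle, csInf_le ⟨0, fun w hw ↦ hw.1.le⟩ ⟨two_pos, ?_⟩⟩
  rwa [integral_cond_eq_div, show (2 : ℝ) ^ 2 = 4 by norm_num]
end
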